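/- arXiv:1012.1675 — 3 statements merged into one kernel-verified Lean document; each statement's English description precedes it below -/
import Mathlib

section
/- Let a ∈ ℝ^n and b ∈ ℝ^m. There exists an n×m row stochastic matrix D with b = aD if and only if Σ_{p=1}^n a_p = Σ_{q=1}^m b_q and Σ_{p=1}^n |a_p| ≥ Σ_{q=1}^m |b_q|. -/
/-!
For sufficiency, give every row with `a p ≥ 0` the same probability vector `u` and every other row
the same `v`, so that `aD = A⁺ u - A⁻ v` with `A^± = ∑ (a p)^±`. The two hypotheses say exactly
that `B⁺ ≤ A⁺` and `B⁻ ≤ A⁻` with equal slack `s`, so `A⁺ u = b⁺ + s / m` and `A⁻ v = b⁻ + s / m`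
can both be solved, and subtracting gives `aD = b`.
-/

open Matrix Finset

variable {ι κ : Type*} [Fintype ι]

theorem sum_eq_sum_posPart_sub_sum_negPart {α : Type*} [AddCommGroup α] [Lattice α]
    [AddLeftMono α] (f : ι → α) : ∑ i, f i = ∑ i, (f i)⁺ - ∑ i, (f i)⁻ := by
  simp only [← sum_sub_distrib, posPart_sub_negPart]

theorem sum_abs_eq_sum_posPart_add_sum_negPart {α : Type*} [AddCommGroup α] [LinearOrder α]
    [IsOrderedAddMonoid α] (f : ι → α) : ∑ i, |f i| = ∑ i, (f i)⁺ + ∑ i, (f i)⁻ := by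
  simp only [← sum_add_distrib, posPart_add_negPart]

theorem sum_vecMul_of_mem_stdSimplex {𝕜 : Type*} [Semiring 𝕜] [PartialOrder 𝕜] [Fintype κ]
    (a : ι → 𝕜) {D : Matrix ι κ 𝕜} (hD : ∀ p, D p ∈ stdSimplex 𝕜 κ) :
    ∑ q, (a ᵥ* D) q = ∑ p, a p := by
  simp only [vecMul, dotProduct]
  rw [sum_comm]
  exact sum_congr rfl fun p _ => by rw [← mul_sum, (hD p).2, mul_one]

section OrderedRing

variable {𝕜 : Type*} [CommRing 𝕜] [LinearOrder 𝕜] [IsStrictOrderedRing 𝕜]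

theorem sum_abs_vecMul_le_of_mem_stdSimplex [Fintype κ] (a : ι → 𝕜) {D : Matrix ι κ 𝕜}
    (hD : ∀ p, D p ∈ stdSimplex 𝕜 κ) : ∑ q, |(a ᵥ* D) q| ≤ ∑ p, |a p| :=
  calc ∑ q, |(a ᵥ* D) q| ≤ ∑ q, (|a| ᵥ* D) q :=
        sum_le_sum fun q _ => (abs_sum_le_sum_abs _ _).trans_eq <|
          sum_congr rfl fun p _ => by rw [abs_mul, abs_of_nonneg ((hD p).1 q)]; rfl
    _ = ∑ p, |a p| := sum_vecMul_of_mem_stdSimplex _ hD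

theorem vecMul_ite_nonneg (a : ι → 𝕜) (u v : κ → 𝕜) :
    a ᵥ* (fun p => if 0 ≤ a p then u else v) = (∑ p, (a p)⁺) • u - (∑ p, (a p)⁻) • v := by
  ext q
  simp only [vecMul, dotProduct, Pi.sub_apply, Pi.smul_apply, smul_eq_mul, sum_mul,
    ← sum_sub_distrib]
  refine sum_congr rfl fun p _ => ?_
  split_ifs with h
  · rw [posPart_eq_self.2 h, negPart_eq_zero.2 h]; ring
  · push Not at h
    rw [posPart_eq_zero.2 h.le, negPart_eq_neg.2 h.le]; ring

end OrderedRing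

section Field

variable {𝕜 : Type*} [Field 𝕜] [LinearOrder 𝕜] [IsStrictOrderedRing 𝕜] [Fintype κ] [Nonempty κ]

theorem exists_mem_stdSimplex_mul_eq_add {x : κ → 𝕜} (hx : ∀ q, 0 ≤ x q) {t : 𝕜}
    (ht : ∑ q, x q ≤ t) :
    ∃ w ∈ stdSimplex 𝕜 κ, ∀ q, t * w q = x q + (t - ∑ q, x q) / Fintype.card κ := by
  classical
  set c := (t - ∑ q, x q) / Fintype.card κ
  have hx_sum : 0 ≤ ∑ q, x q := sum_nonneg fun q _ => hx q
  rcases (hx_sum.trans ht).eq_or_lt with ht0 | ht0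
  · have hx0 : ∀ q, x q = 0 := fun q =>
      (sum_eq_zero_iff_of_nonneg fun q _ => hx q).1 (le_antisymm (ht0 ▸ ht) hx_sum) q (mem_univ q)
    refine ⟨Pi.single (Classical.arbitrary κ) 1, single_mem_stdSimplex 𝕜 _, fun q => ?_⟩
    simp [c, ← ht0, hx0]
  · have hc : 0 ≤ c := div_nonneg (sub_nonneg.2 ht) (Nat.cast_nonneg _)
    have hcard : (Fintype.card κ : 𝕜) ≠ 0 := Nat.cast_ne_zero.2 Fintype.card_ne_zero
    refine ⟨fun q => (x q + c) / t, ⟨fun q => div_nonneg (add_nonneg (hx q) hc) ht0.le, ?_⟩,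
      fun q => mul_div_cancel₀ _ ht0.ne'⟩
    rw [← sum_div, sum_add_distrib, sum_const, card_univ, nsmul_eq_mul, mul_div_cancel₀ _ hcard,
      add_sub_cancel, div_self ht0.ne']

theorem exists_mem_stdSimplex_vecMul_eq {a : ι → 𝕜} {b : κ → 𝕜}
    (hsum : ∑ p, a p = ∑ q, b q) (habs : ∑ q, |b q| ≤ ∑ p, |a p|) :
    ∃ D : Matrix ι κ 𝕜, (∀ p, D p ∈ stdSimplex 𝕜 κ) ∧ a ᵥ* D = b := by
  have ha₁ := sum_eq_sum_posPart_sub_sum_negPart a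
  have ha₂ := sum_abs_eq_sum_posPart_add_sum_negPart a
  have hb₁ := sum_eq_sum_posPart_sub_sum_negPart b
  have hb₂ := sum_abs_eq_sum_posPart_add_sum_negPart b
  obtain ⟨u, hu, hbu⟩ := exists_mem_stdSimplex_mul_eq_add (fun q => posPart_nonneg (b q))
    (t := ∑ p, (a p)⁺) (by linarith)
  obtain ⟨v, hv, hbv⟩ := exists_mem_stdSimplex_mul_eq_add (fun q => negPart_nonneg (b q))
    (t := ∑ p, (a p)⁻) (by linarith)
  have equal_slack : ∑ p, (a p)⁺ - ∑ q, (b q)⁺ = ∑ p, (a p)⁻ - ∑ q, (b q)⁻ := by linarith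
  refine ⟨fun p => if 0 ≤ a p then u else v, fun p => by dsimp only; split_ifs <;> assumption, ?_⟩
  ext q
  rw [vecMul_ite_nonneg, Pi.sub_apply, Pi.smul_apply, Pi.smul_apply, smul_eq_mul, smul_eq_mul,
    hbu, hbv, equal_slack, add_sub_add_right_eq_sub, posPart_sub_negPart]

end Field

theorem stmt_10_general (n m : ℕ) (hm : 0 < m) (a : Fin n → ℝ) (b : Fin m → ℝ) :
    (∃ D : Matrix (Fin n) (Fin m) ℝ, (∀ p q, 0 ≤ D p q) ∧ (∀ p, ∑ q, D p q = 1) ∧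
      ∀ q, b q = ∑ p, a p * D p q) ↔
    (∑ p, a p = ∑ q, b q ∧ ∑ q, |b q| ≤ ∑ p, |a p|) := by
  have : Nonempty (Fin m) := Fin.pos_iff_nonempty.1 hm
  constructor
  · rintro ⟨D, hpos, hrow, hb⟩
    obtain rfl : b = a ᵥ* D := funext hb
    have hD : ∀ p, D p ∈ stdSimplex ℝ (Fin m) := fun p => ⟨hpos p, hrow p⟩
    exact ⟨(sum_vecMul_of_mem_stdSimplex a hD).symm, sum_abs_vecMul_le_of_mem_stdSimplex a hD⟩
  · rintro ⟨hsum, habs⟩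
    obtain ⟨D, hD, rfl⟩ := exists_mem_stdSimplex_vecMul_eq hsum habs
    exact ⟨D, fun p => (hD p).1, fun p => (hD p).2, fun q => rfl⟩

theorem stmt_10 (n m : ℕ) (hn : 0 < n) (hm : 0 < m) (a : Fin n → ℝ) (b : Fin m → ℝ) :
    (∃ D : Matrix (Fin n) (Fin m) ℝ, (∀ p q, 0 ≤ D p q) ∧ (∀ p, ∑ q, D p q = 1) ∧
      ∀ q, b q = ∑ p, a p * D p q) ↔
    (∑ p, a p = ∑ q, b q ∧ ∑ q, |b q| ≤ ∑ p, |a p|) :=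
  stmt_10_general n m hm a b
end

section
/- Let a ∈ ℝ^n, b ∈ ℝ^m, and suppose D is an n×m row stochastic matrix with b = aD. If a_p ≠ 0 for some p, then there exists a row stochastic matrix D' with b = aD' such that the p-th and q-th rows of D' are identical whenever a_p a_q > 0. -/
/-!
Group the row indices into classes on which `a` has constant sign (positive, negative, zero) and
replace every row of `D` in a class of nonzero weight `W = ∑ a_r` by the `a`-weighted average
`(∑ a_r D_r) / W` of the rows of that class. This does not change the contribution
`∑ a_r D_r` of the class to `aD`; the averaging weights `a_r / W` are nonnegative because `a`
has constant sign on the class, and they sum to one, so the new rows are again stochastic.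
-/

open Matrix Finset

section PoolRows

variable {ι κ σ 𝕜 : Type*} [Fintype ι] [DecidableEq κ] [Field 𝕜]

def classWeight (a : ι → 𝕜) (c : ι → κ) (k : κ) : 𝕜 :=
  ∑ r with c r = k, a r

open Classical in
noncomputable def poolRows (a : ι → 𝕜) (c : ι → κ) (D : Matrix ι σ 𝕜) : Matrix ι σ 𝕜 := fun p q =>
  if classWeight a c (c p) = 0 then D p q
  else (∑ r with c r = c p, a r * D r q) / classWeight a c (c p)

open Classical in
theorem poolRows_apply_of_class_eq (a : ι → 𝕜) (c : ι → κ) (D : Matrix ι σ 𝕜) {p : ι} {k : κ}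
    (hp : c p = k) (q : σ) :
    poolRows a c D p q = if classWeight a c k = 0 then D p q
      else (∑ r with c r = k, a r * D r q) / classWeight a c k := by
  subst hp
  rfl

theorem poolRows_row_eq_of_class_eq (a : ι → 𝕜) (c : ι → κ) (D : Matrix ι σ 𝕜) {p p' : ι}
    (h : c p = c p') (hW : classWeight a c (c p) ≠ 0) : poolRows a c D p = poolRows a c D p' := by
  funext q
  rw [poolRows_apply_of_class_eq a c D rfl, poolRows_apply_of_class_eq a c D h.symm, if_neg hW,
    if_neg hW]

theorem sum_poolRows_row [Fintype σ] (a : ι → 𝕜) (c : ι → κ) {D : Matrix ι σ 𝕜}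
    (hD : ∀ p, ∑ q, D p q = 1) (p : ι) : ∑ q, poolRows a c D p q = 1 := by
  by_cases hW : classWeight a c (c p) = 0
  · simpa only [poolRows, if_pos hW] using hD p
  · simp only [poolRows, if_neg hW, ← sum_div]
    rw [sum_comm]
    simp only [← mul_sum, hD, mul_one]
    exact div_self hW

theorem sum_mul_poolRows (a : ι → 𝕜) (c : ι → κ) (D : Matrix ι σ 𝕜) (q : σ) :
    ∑ p, a p * poolRows a c D p q = ∑ p, a p * D p q := by
  have hc : ∀ p ∈ univ, c p ∈ univ.image c := fun p _ => mem_image_of_mem c (mem_univ p)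
  rw [← sum_fiberwise_of_maps_to hc, ← sum_fiberwise_of_maps_to hc]
  refine sum_congr rfl fun k _ => ?_
  by_cases hW : classWeight a c k = 0
  · refine sum_congr rfl fun p hp => ?_
    rw [poolRows_apply_of_class_eq a c D (mem_filter.mp hp).2, if_pos hW]
  · calc ∑ p with c p = k, a p * poolRows a c D p q
        = ∑ p with c p = k, a p * ((∑ r with c r = k, a r * D r q) / classWeight a c k) :=
          sum_congr rfl fun p hp => by
            rw [poolRows_apply_of_class_eq a c D (mem_filter.mp hp).2, if_neg hW]
      _ = ∑ p with c p = k, a p * D p q := by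
          rw [← sum_mul, ← classWeight, mul_div_cancel₀ _ hW]

theorem poolRows_nonneg [LinearOrder 𝕜] [IsStrictOrderedRing 𝕜] {a : ι → 𝕜} {c : ι → κ}
    {D : Matrix ι σ 𝕜} (hD : ∀ p q, 0 ≤ D p q) (hc : ∀ p r, c p = c r → 0 ≤ a p * a r)
    (p : ι) (q : σ) : 0 ≤ poolRows a c D p q := by
  by_cases hW : classWeight a c (c p) = 0
  · simpa only [poolRows, if_pos hW] using hD p q
  simp only [poolRows, if_neg hW]
  set W := classWeight a c (c p)
  set N := ∑ r with c r = c p, a r * D r q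
  -- Multiplying by `W` turns the quotient into a sum of products `a_r a_s D_rq` within one class.
  have hNW : 0 ≤ N * W := by
    simp only [N, W, classWeight, sum_mul, mul_sum]
    refine sum_nonneg fun r hr => sum_nonneg fun s hs => ?_
    have hrs : 0 ≤ a r * a s := hc r s ((mem_filter.mp hr).2.trans (mem_filter.mp hs).2.symm)
    linarith [mul_nonneg hrs (hD s q)]
  have : N / W = N * W / W ^ 2 := by field_simp
  rw [this]
  positivity

theorem classWeight_ne_zero [LinearOrder 𝕜] [IsStrictOrderedRing 𝕜] {a : ι → 𝕜} {c : ι → κ}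
    (hc : ∀ p r, c p = c r → 0 ≤ a p * a r) {p : ι} (hp : a p ≠ 0) : classWeight a c (c p) ≠ 0 := by
  have hpos : 0 < a p * classWeight a c (c p) := by
    simp only [classWeight, mul_sum]
    exact sum_pos' (fun r hr => hc p r (mem_filter.mp hr).2.symm)
      ⟨p, mem_filter.mpr ⟨mem_univ p, rfl⟩, mul_self_pos.mpr hp⟩
  exact right_ne_zero_of_mul hpos.ne'

end PoolRows

theorem sign_eq_sign_of_mul_pos {R : Type*} [Ring R] [LinearOrder R] [IsStrictOrderedRing R]
    {x y : R} (h : 0 < x * y) : SignType.sign x = SignType.sign y := by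
  rcases mul_pos_iff.mp h with ⟨hx, hy⟩ | ⟨hx, hy⟩
  · rw [sign_pos hx, sign_pos hy]
  · rw [sign_neg hx, sign_neg hy]

theorem mul_nonneg_of_sign_eq_sign {R : Type*} [Ring R] [LinearOrder R] [IsStrictOrderedRing R]
    {x y : R} (h : SignType.sign x = SignType.sign y) :
    0 ≤ x * y := by
  rcases lt_trichotomy x 0 with hx | hx | hx
  · rw [sign_neg hx, eq_comm, sign_eq_neg_one_iff] at h
    exact (mul_pos_of_neg_of_neg hx h).le
  · simp [hx]
  · rw [sign_pos hx, eq_comm, sign_eq_one_iff] at h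
    positivity

theorem stmt_12_general (n m : ℕ) (a : Fin n → ℝ) (b : Fin m → ℝ)
    (D : Matrix (Fin n) (Fin m) ℝ) (hD0 : ∀ p q, 0 ≤ D p q)
    (hDrow : ∀ p, ∑ q, D p q = 1)
    (hbD : ∀ q, b q = ∑ p, a p * D p q) :
    ∃ D' : Matrix (Fin n) (Fin m) ℝ, (∀ p q, 0 ≤ D' p q) ∧ (∀ p, ∑ q, D' p q = 1) ∧
      (∀ q, b q = ∑ p, a p * D' p q) ∧
      ∀ p q, 0 < a p * a q → D' p = D' q := by
  have hc : ∀ p r, SignType.sign (a p) = SignType.sign (a r) → 0 ≤ a p * a r :=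
    fun _ _ => mul_nonneg_of_sign_eq_sign
  refine ⟨poolRows a (SignType.sign ∘ a) D, poolRows_nonneg hD0 hc, sum_poolRows_row _ _ hDrow,
    fun q => (hbD q).trans (sum_mul_poolRows _ _ D q).symm, fun p q hpq => ?_⟩
  exact poolRows_row_eq_of_class_eq _ _ D (sign_eq_sign_of_mul_pos hpq)
    (classWeight_ne_zero hc (left_ne_zero_of_mul hpq.ne'))

theorem stmt_12 (n m : ℕ) (a : Fin n → ℝ) (b : Fin m → ℝ)
    (D : Matrix (Fin n) (Fin m) ℝ) (hD0 : ∀ p q, 0 ≤ D p q)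
    (hDrow : ∀ p, ∑ q, D p q = 1)
    (hbD : ∀ q, b q = ∑ p, a p * D p q)
    (hp : ∃ p, a p ≠ 0) :
    ∃ D' : Matrix (Fin n) (Fin m) ℝ, (∀ p q, 0 ≤ D' p q) ∧ (∀ p, ∑ q, D' p q = 1) ∧
      (∀ q, b q = ∑ p, a p * D' p q) ∧
      ∀ p q, 0 < a p * a q → D' p = D' q :=
  stmt_12_general n m a b D hD0 hDrow hbD
end

section
/- Let a, b ∈ ℝ^n. If for every t ∈ ℝ there exists an n×n row stochastic matrix D_t with (b − t·1) = (a − t·1) D_t (where 1 = (1,…,1)), then b is majorized by a. -/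
/-!
Testing the hypothesis at `t = 0` gives `b = a D` with `D` row stochastic, so the totals agree.
For the partial sums, every column subset `s` of a row-stochastic `D` has row sums in `[0, 1]`, so
`∑_{q ∈ s} (b q - t) = ∑_p (a p - t) ∑_{q ∈ s} D p q ≤ ∑_p (a p - t)⁺` for every `t`. Choosing
for `t` the smallest of the `|s|` largest entries of `a` turns the right-hand side into
`∑_{p ∈ T} a p - |s| t` with `T` the set of those entries.
-/

open Finset

variable {ι : Type*} [Fintype ι]

lemma mul_le_max_zero_of_nonneg_of_le_one {x c : ℝ} (hc₀ : 0 ≤ c) (hc₁ : c ≤ 1) :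
    x * c ≤ max x 0 := by
  rcases le_total 0 x with hx | hx
  · exact (mul_le_of_le_one_right hx hc₁).trans (le_max_left _ _)
  · exact (mul_nonpos_of_nonpos_of_nonneg hx hc₀).trans (le_max_right _ _)

lemma sum_sum_mul_le_sum_max_zero (x : ι → ℝ) {D : ι → ι → ℝ} (hD₀ : ∀ p q, 0 ≤ D p q)
    (hD₁ : ∀ p, ∑ q, D p q = 1) (s : Finset ι) :
    ∑ q ∈ s, ∑ p, x p * D p q ≤ ∑ p, max (x p) 0 := by
  rw [sum_comm]
  refine sum_le_sum fun p _ => ?_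
  rw [← mul_sum]
  refine mul_le_max_zero_of_nonneg_of_le_one (sum_nonneg fun q _ => hD₀ p q) ?_
  exact hD₁ p ▸ sum_le_sum_of_subset_of_nonneg (subset_univ s) fun q _ _ => hD₀ p q

lemma sum_sum_mul_eq_sum (x : ι → ℝ) {D : ι → ι → ℝ} (hD₁ : ∀ p, ∑ q, D p q = 1) :
    ∑ q, ∑ p, x p * D p q = ∑ p, x p := by
  rw [sum_comm]
  simp only [← mul_sum, hD₁, mul_one]

lemma sum_max_sub_zero_eq {a : ι → ℝ} {T : Finset ι} {t : ℝ} (hT : ∀ p ∈ T, t ≤ a p)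
    (hTc : ∀ p ∉ T, a p ≤ t) :
    ∑ p, max (a p - t) 0 = ∑ p ∈ T, a p - T.card * t := by
  classical
  rw [← sum_subset (subset_univ T) fun p _ hp => max_eq_right (sub_nonpos.2 (hTc p hp)),
    sum_congr rfl fun p hp => max_eq_left (sub_nonneg.2 (hT p hp)), sum_sub_distrib, sum_const,
    nsmul_eq_mul]

/-- Any `k`-set maximizing the sum of `a` works, by an exchange argument. -/
lemma exists_card_eq_forall_le (a : ι → ℝ) {k : ℕ} (hk : k ≤ Fintype.card ι) :
    ∃ T : Finset ι, T.card = k ∧ ∀ p ∈ T, ∀ q ∉ T, a q ≤ a p := by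
  classical
  obtain ⟨T, hTk, hTmax⟩ := exists_max_image (powersetCard k univ) (fun T => ∑ p ∈ T, a p)
    (powersetCard_nonempty.2 (by simpa using hk))
  rw [mem_powersetCard_univ] at hTk
  refine ⟨T, hTk, fun p hp q hq => ?_⟩
  by_contra! hlt
  have hq' : q ∉ T.erase p := fun h => hq (mem_of_mem_erase h)
  have hcard : (insert q (T.erase p)).card = k := by
    rw [card_insert_of_notMem hq', card_erase_of_mem hp, hTk]
    have := card_pos.2 ⟨p, hp⟩
    omega
  have hle := hTmax _ (mem_powersetCard_univ.2 hcard)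
  rw [sum_insert hq', ← add_sum_erase T a hp] at hle
  linarith

lemma exists_card_eq_threshold (a : ι → ℝ) {k : ℕ} (hk₀ : 0 < k) (hk : k ≤ Fintype.card ι) :
    ∃ (T : Finset ι) (t : ℝ), T.card = k ∧ (∀ p ∈ T, t ≤ a p) ∧ ∀ q ∉ T, a q ≤ t := by
  obtain ⟨T, hTk, hT⟩ := exists_card_eq_forall_le a hk
  obtain ⟨m, hmT, hm⟩ := exists_min_image T a (card_pos.1 (hTk ▸ hk₀))
  exact ⟨T, a m, hTk, hm, fun q hq => hT m hmT q hq⟩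

theorem stmt_14 (n : ℕ) (a b : Fin n → ℝ)
    (h : ∀ t : ℝ, ∃ D : Matrix (Fin n) (Fin n) ℝ,
      (∀ p q, 0 ≤ D p q) ∧ (∀ p, ∑ q, D p q = 1) ∧
      ∀ q, b q - t = ∑ p, (a p - t) * D p q) :
    (∀ s : Finset (Fin n), ∃ t : Finset (Fin n),
      t.card = s.card ∧ ∑ i ∈ s, b i ≤ ∑ i ∈ t, a i) ∧
    ∑ i, b i = ∑ i, a i := by
  have bound (s : Finset (Fin n)) (t : ℝ) :
      ∑ q ∈ s, b q - s.card * t ≤ ∑ p, max (a p - t) 0 := by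
    obtain ⟨D, hD₀, hD₁, hD⟩ := h t
    calc ∑ q ∈ s, b q - s.card * t = ∑ q ∈ s, ∑ p, (a p - t) * D p q := by
          rw [← sum_congr rfl fun q _ => hD q, sum_sub_distrib, sum_const, nsmul_eq_mul]
      _ ≤ ∑ p, max (a p - t) 0 := sum_sum_mul_le_sum_max_zero _ hD₀ hD₁ s
  refine ⟨fun s => ?_, ?_⟩
  · rcases s.eq_empty_or_nonempty with rfl | hs
    · exact ⟨∅, rfl, by simp⟩
    obtain ⟨T, t, hTs, hT, hTc⟩ :=
      exists_card_eq_threshold a hs.card_pos (card_le_univ s)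
    have := bound s t
    rw [sum_max_sub_zero_eq hT hTc, hTs] at this
    exact ⟨T, hTs, by linarith⟩
  · obtain ⟨D, -, hD₁, hD⟩ := h 0
    have hb : ∀ q, b q = ∑ p, a p * D p q := by simpa using hD
    simpa only [← hb] using sum_sum_mul_eq_sum a hD₁
end
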